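/- For every n ≥ 0 and all indices 1 ≤ i ≤ j ≤ n+1, the identity u_j ∘ u_i = u_i ∘ u_{j+1} holds as maps [n+2] → [n] (on each side the right factor is taken at dimension n+1 and the left factor at dimension n). -/
import Mathlib


/-- The elementary coface `d_i^{(n+1)} : [n] → [n+1]` (monotonic injection omitting `i`):
`k ↦ k` for `k < i` and `k ↦ k+1` for `k ≥ i`. -/
def dMap (n i : ℕ) : Fin (n + 1) → Fin (n + 2) :=
  fun k => if (k : ℕ) < i then ⟨k, by omega⟩ else ⟨(k : ℕ) + 1, by omega⟩

/-- The elementary quasi-codegeneracy `u_i^{(n)} : [n+1] → [n]`: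
`u_i 0 = u_i i = 0`, `u_i k = k` for `1 ≤ k ≤ i-1`, and `u_i k = k-1` for `k > i`. -/
def uMap (n i : ℕ) : Fin (n + 2) → Fin (n + 1) :=
  fun k => if (k : ℕ) = 0 ∨ (k : ℕ) = i then 0
    else if h : (k : ℕ) < i ∧ (k : ℕ) < n + 1 then ⟨k, h.2⟩
    else ⟨(k : ℕ) - 1, by omega⟩

/-- The adjacent transposition `t_i : [n] → [n]` exchanging `i` and `i+1`. -/
def tMap (n i : ℕ) : Fin (n + 1) → Fin (n + 1) :=
  fun k => if h : (k : ℕ) = i ∧ i + 1 < n + 1 then ⟨i + 1, h.2⟩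
    else if h2 : (k : ℕ) = i + 1 then ⟨i, by omega⟩
    else k

/-- The standard cyclic permutation `z_i : [n] → [n]`:
`k ↦ k+1` for `k ≤ i-1`, `i ↦ 0`, and `k ↦ k` for `k > i`. -/
def zMap (n i : ℕ) : Fin (n + 1) → Fin (n + 1) :=
  fun k => if (k : ℕ) = i then 0
    else if h : (k : ℕ) < i ∧ (k : ℕ) + 1 < n + 1 then ⟨(k : ℕ) + 1, h.2⟩
    else k

lemma uMap_val (n i : ℕ) (k : Fin (n + 2)) :
    (uMap n i k : ℕ) = if (k : ℕ) = 0 ∨ (k : ℕ) = i then 0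
      else if (k : ℕ) < i ∧ (k : ℕ) < n + 1 then (k : ℕ) else (k : ℕ) - 1 := by
  simp only [uMap]
  split_ifs <;> rfl

/-- `u_j ∘ u_i = u_i ∘ u_{j+1}` as maps `[n+2] → [n]`, for `1 ≤ i ≤ j ≤ n+1`. -/
theorem u_comp_u (n i j : ℕ) (hi : 1 ≤ i) (hij : i ≤ j) (hj : j ≤ n + 1) :
    uMap n j ∘ uMap (n + 1) i = uMap n i ∘ uMap (n + 1) (j + 1) := by
  funext k
  have hk := k.isLt
  apply Fin.ext
  simp only [Function.comp, uMap_val]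
  split_ifs <;> omega
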